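/- arXiv:0804.3802 — 2 statements merged into one kernel-verified Lean document; each statement's English description precedes it below -/
import Mathlib

section
/- Let A be a unital C*-algebra, Φ : A → A a positive linear map that is faithful (Φ(a) = 0 and a ≥ 0 implies a = 0), and suppose there is a sequence of isometries Vₙ ∈ A with limₙ Vₙ* a Vₙ = Φ(a) for all a ∈ A. If the range of Φ is contained in a simple unital C*-subalgebra F of A containing the unit and Φ restricts to the identity on F, then A is simple. -/
/-- If a unital C*-algebra `A` admits a faithful positive map `Φ` onto a simple
unital C*-subalgebra `F` (with `Φ|_F = id`) which is approximately inner via a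
sequence of isometries, then `A` is simple. -/
theorem stmt_7 {A : Type*} [CStarAlgebra A] [PartialOrder A] [StarOrderedRing A]
    (Φ : A →ₗ[ℂ] A)
    (hpos : ∀ a : A, 0 ≤ a → 0 ≤ Φ a)
    (hfaith : ∀ a : A, 0 ≤ a → Φ a = 0 → a = 0)
    (V : ℕ → A) (hiso : ∀ n, star (V n) * V n = 1)
    (hlim : ∀ a : A, Filter.Tendsto (fun n => star (V n) * a * V n)
      Filter.atTop (nhds (Φ a)))
    (F : StarSubalgebra ℂ A) (hFclosed : IsClosed (F : Set A))
    (hrange : ∀ a : A, Φ a ∈ F)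
    (hid : ∀ b ∈ F, Φ b = b)
    (hFsimple : ∀ J : TwoSidedIdeal F, IsClosed (J : Set F) → J = ⊥ ∨ J = ⊤) :
    ∀ I : TwoSidedIdeal A, IsClosed (I : Set A) → I = ⊥ ∨ I = ⊤ := by
  intro I hIclosed
  by_cases hbot : I = ⊥
  · exact Or.inl hbot
  right
  -- Φ maps I into I (since I is closed and Vₙ* a Vₙ ∈ I)
  have hΦI : ∀ a : A, a ∈ I → Φ a ∈ I := by
    intro a ha
    have hmem : ∀ n, star (V n) * a * V n ∈ I := fun n =>
      I.mul_mem_right _ _ (I.mul_mem_left _ _ ha)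
    exact hIclosed.mem_of_tendsto (hlim a) (Filter.Eventually.of_forall hmem)
  -- J := preimage of I in F
  let f : F →+* A := (F.subtype : F →⋆ₐ[ℂ] A).toRingHom
  let J : TwoSidedIdeal F := I.comap f
  have hJclosed : IsClosed (J : Set F) := by
    have : (J : Set F) = (Subtype.val : F → A) ⁻¹' (I : Set A) := rfl
    rw [this]
    exact hIclosed.preimage continuous_subtype_val
  -- J is nonzero
  obtain ⟨a, haI, ha0⟩ : ∃ a : A, a ∈ I ∧ a ≠ 0 := by
    by_contra h
    push_neg at h
    exact hbot (eq_bot_iff.2 fun x hx => h x hx)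
  have hsa : star a * a ∈ I := I.mul_mem_left _ _ haI
  have hΦsa : Φ (star a * a) ∈ I := hΦI _ hsa
  have hΦne : Φ (star a * a) ≠ 0 := by
    intro h
    exact ha0 ((CStarRing.star_mul_self_eq_zero_iff a).1
      (hfaith _ (star_mul_self_nonneg a) h))
  have hJne : J ≠ ⊥ := by
    intro h
    have : (⟨Φ (star a * a), hrange _⟩ : F) ∈ J := by
      show f ⟨Φ (star a * a), hrange _⟩ ∈ I
      exact hΦsa
    rw [h] at this
    exact hΦne (congrArg Subtype.val ((TwoSidedIdeal.mem_bot F).1 this))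
  have hJtop : J = ⊤ := (hFsimple J hJclosed).resolve_left hJne
  -- hence 1 ∈ I
  have h1 : (1 : A) ∈ I := by
    have : (1 : F) ∈ J := hJtop ▸ trivial
    exact this
  exact TwoSidedIdeal.one_mem_iff I |>.1 h1
end

section
/- Let σ be a permutation of a finite set E × F where E, F are finite sets, and define sequences by (a_{n+1}, b_{n+1}) = σ(a_n, b_n) starting from (a₀, b₀). Then there exists n ≥ 1 with (a_n, b_n) = (a₀, b₀), and consequently the products A = a_{n-1}⋯a₁a₀ and B = b₀b₁⋯b_{n-1} in any monoid where the relation a_i b_i = b_{i+1} a_{i+1} holds for all i (indices mod n) satisfy A·B = B·A. -/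
/-- Orbits of a permutation of a finite set `E × F` return to the start, and the
resulting products `A = a_{n-1}⋯a₁a₀`, `B = b₀b₁⋯b_{n-1}` commute in any monoid
where `aᵢbᵢ = b_{i+1}a_{i+1}`. -/
theorem stmt_17 {E F : Type*} [Finite E] [Finite F]
    (σ : Equiv.Perm (E × F)) (p₀ : E × F)
    {M : Type*} [Monoid M] (e : E → M) (f : F → M)
    (hrel : ∀ i : ℕ,
      e (σ^[i] p₀).1 * f (σ^[i] p₀).2 = f (σ^[i + 1] p₀).2 * e (σ^[i + 1] p₀).1) :
    ∃ n : ℕ, 1 ≤ n ∧ σ^[n] p₀ = p₀ ∧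
      (((List.range n).reverse.map fun i => e (σ^[i] p₀).1).prod *
          ((List.range n).map fun i => f (σ^[i] p₀).2).prod =
        ((List.range n).map fun i => f (σ^[i] p₀).2).prod *
          ((List.range n).reverse.map fun i => e (σ^[i] p₀).1).prod) := by
  obtain ⟨n, hn1, hn⟩ : ∃ n : ℕ, 1 ≤ n ∧ σ^[n] p₀ = p₀ := by
    have : Finite (Equiv.Perm (E × F)) := inferInstance
    refine ⟨orderOf σ, orderOf_pos σ, ?_⟩
    simp [Equiv.Perm.iterate_eq_pow, pow_orderOf_eq_one σ]
  refine ⟨n, hn1, hn, ?_⟩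
  set a : ℕ → M := fun i => e (σ^[i] p₀).1 with ha
  set b : ℕ → M := fun i => f (σ^[i] p₀).2 with hb
  have hper : ∀ i : ℕ, σ^[i + n] p₀ = σ^[i] p₀ := by
    intro i
    rw [Function.iterate_add_apply, hn]
  have hab : ∀ i, a i * b i = b (i + 1) * a (i + 1) := hrel
  set P : ℕ → ℕ → M := fun k j => ((List.range k).reverse.map fun i => a (i + j)).prod with hP
  have L1 : ∀ k j, P k j * b j = b (j + k) * P k (j + 1) := by
    intro k
    induction k with
    | zero => simp [hP]
    | succ k ih =>
      intro j
      have h1 : P (k + 1) j = a (k + j) * P k j := by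
        simp [hP, List.range_succ]
      have h2 : P (k + 1) (j + 1) = a (k + j + 1) * P k (j + 1) := by
        simp [hP, List.range_succ, Nat.add_assoc]
      rw [h1, h2, mul_assoc, ih j, ← mul_assoc]
      have := hab (k + j)
      rw [Nat.add_comm k j] at this ⊢
      rw [this, mul_assoc]
      ring_nf
  have hbper : ∀ j, b (j + n) = b j := by
    intro j; simp only [hb, hper j]
  have haper : ∀ i, a (i + n) = a i := by
    intro i; simp only [ha, hper i]
  have L2 : ∀ j, P n j * b j = b j * P n (j + 1) := by
    intro j
    rw [L1 n j, hbper j]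
  have L3 : ∀ m, P n 0 * ((List.range m).map b).prod = ((List.range m).map b).prod * P n m := by
    intro m
    induction m with
    | zero => simp
    | succ m ih =>
      rw [List.range_succ]
      simp only [List.map_append, List.prod_append, List.map_cons, List.map_nil,
        List.prod_cons, List.prod_nil, mul_one]
      rw [← mul_assoc, ih, mul_assoc, L2 m, ← mul_assoc]
  have hPn : P n n = P n 0 := by
    simp only [hP]
    congr 1
    apply List.map_congr_left
    intro i _
    simp [haper i]
  have key := L3 n
  rw [hPn] at key
  have hA : P n 0 = ((List.range n).reverse.map fun i => e (σ^[i] p₀).1).prod := by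
    simp [hP, ha]
  have hB : ((List.range n).map b).prod = ((List.range n).map fun i => f (σ^[i] p₀).2).prod := rfl
  rw [hA, hB] at key
  exact key
end
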